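/- arXiv:1712.07988 — 2 statements merged into one kernel-verified Lean document; each statement's English description precedes it below -/
import Mathlib

section
/- For a closed Hermitian operator A and δ, ε ≥ 0, one has the inclusion F(A+δ, ε) ⊆ F(A, δ+ε). -/
open InnerProductSpace RCLike Filter Topology MeasureTheory Set

variable {𝕜 E : Type*} [RCLike 𝕜] [NormedAddCommGroup E] [InnerProductSpace 𝕜 E]

local notation "⟪" x ", " y "⟫" => @inner 𝕜 _ _ x y

/-- `PowRel A n x y` means `x ∈ D(Aⁿ)` and `Aⁿ x = y`. -/
inductive PowRel (A : E →ₗ.[𝕜] E) : ℕ → E → E → Prop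
  | zero (x : E) : PowRel A 0 x x
  | succ {n : ℕ} {x y : E} (h : PowRel A n x y) (hy : y ∈ A.domain) :
      PowRel A (n + 1) x (A ⟨y, hy⟩)

/-- `F(A,λ)` for an unbounded operator. -/
def Fset (A : E →ₗ.[𝕜] E) (lam : ℝ) : Set E :=
  {x | ∀ n : ℕ, ∃ y : E, PowRel A n x y ∧ ‖y‖ ≤ lam ^ n * ‖x‖}

/-- orthogonal complement of a set -/
def ocompl (𝕜' : Type*) {E' : Type*} [RCLike 𝕜'] [NormedAddCommGroup E']
    [InnerProductSpace 𝕜' E'] (S : Set E') : Set E' :=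
  {y | ∀ x ∈ S, (inner 𝕜' x y : 𝕜') = 0}

/-- Hermitian (symmetric) partially defined operator. -/
def IsHermitianPMap (A : E →ₗ.[𝕜] E) : Prop :=
  ∀ x y : A.domain, ⟪A x, (y : E)⟫ = ⟪(x : E), A y⟫

/-- Self-adjoint partially defined operator (densely defined, symmetric, maximal). -/
def IsSelfAdjointPMap (A : E →ₗ.[𝕜] E) : Prop :=
  Dense (A.domain : Set E) ∧ IsHermitianPMap A ∧
    ∀ y z : E, (∀ x : A.domain, ⟪A x, y⟫ = ⟪(x : E), z⟫) →
      ∃ hy : y ∈ A.domain, A ⟨y, hy⟩ = z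

/-- `F(T,λ)` for a bounded operator. -/
def FsetB (T : E →L[𝕜] E) (lam : ℝ) : Set E :=
  {x | ∀ n : ℕ, ‖(T ^ n) x‖ ≤ lam ^ n * ‖x‖}

/-- Spectral family (resolution of the identity). -/
def IsSpectralFamily (P : ℝ → (E →L[𝕜] E)) : Prop :=
  (∀ t, IsIdempotentElem (P t)) ∧
  (∀ t x y, ⟪P t x, y⟫ = ⟪x, P t y⟫) ∧
  (∀ s t : ℝ, s ≤ t → ∀ x, P t (P s x) = P s x) ∧
  (∀ t x, Tendsto (fun s => P s x) (𝓝[>] t) (𝓝 (P t x))) ∧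
  (∀ x, Tendsto (fun t => P t x) atBot (𝓝 (0 : E))) ∧
  (∀ x, Tendsto (fun t => P t x) atTop (𝓝 x))

open Classical in
/-- Lebesgue–Stieltjes measure of a monotone right-continuous function (junk value otherwise). -/
noncomputable def stMeasure (f : ℝ → ℝ) : Measure ℝ :=
  if h : Monotone f ∧ ∀ x, ContinuousWithinAt f (Ici x) x then
    StieltjesFunction.measure ⟨f, h.1, h.2⟩ else 0

/-- The operator `x ↦ A x + δ x` with domain `D(A)`. -/
noncomputable def shiftPMap (A : E →ₗ.[𝕜] E) (δ : ℝ) : E →ₗ.[𝕜] E :=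
  ⟨A.domain, A.toFun + (δ : 𝕜) • A.domain.subtype⟩

/-!
Write `B = A + δ` and let `y k = Bᵏ x`. Since `A = B - δ` on `D(A)`, the vectors
`Aⁿ Bᵏ x` are obtained from the sequence `y` by applying `n` times the operation
`y ↦ (k ↦ y (k + 1) - δ • y k)`, which multiplies a bound of the form `C εᵏ` by `δ + ε`.
Taking `k = 0` gives `‖Aⁿ x‖ ≤ (δ + ε)ⁿ ‖x‖`.
-/

namespace PowRel

variable {A : E →ₗ.[𝕜] E}

theorem unique {n : ℕ} {x y y' : E} (h : PowRel A n x y) (h' : PowRel A n x y') : y = y' := by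
  induction h generalizing y' with
  | zero => cases h'; rfl
  | succ h _ ih =>
    cases h' with
    | succ h' _ =>
      obtain rfl := ih h'
      rfl

theorem exists_of_succ {n : ℕ} {x z : E} (h : PowRel A (n + 1) x z) :
    ∃ (y : E) (hy : y ∈ A.domain), PowRel A n x y ∧ A ⟨y, hy⟩ = z := by
  cases h with
  | succ h hy => exact ⟨_, hy, h, rfl⟩

theorem apply_eq_succ {x : E} {y : ℕ → E} (h : ∀ n, PowRel A n x (y n)) (n : ℕ) :
    ∃ hy : y n ∈ A.domain, A ⟨y n, hy⟩ = y (n + 1) := by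
  obtain ⟨y', hy', h', hA⟩ := (h (n + 1)).exists_of_succ
  obtain rfl : y' = y n := h'.unique (h n)
  exact ⟨hy', hA⟩

theorem of_apply_eq_succ {z : ℕ → E} (hz : ∀ n, ∃ h : z n ∈ A.domain, A ⟨z n, h⟩ = z (n + 1))
    (n : ℕ) : PowRel A n (z 0) (z n) := by
  induction n with
  | zero => exact .zero _
  | succ n ih =>
    obtain ⟨h, hA⟩ := hz n
    exact hA ▸ ih.succ h

end PowRel

def shiftSubSmul {K F : Type*} [SMul K F] [Sub F] (c : K) (y : ℕ → F) : ℕ → F :=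
  fun k => y (k + 1) - c • y k

section Bounds

variable {K F : Type*} [NormedField K] [SeminormedAddCommGroup F] [NormedSpace K F]

theorem norm_shiftSubSmul_le (c : K) {y : ℕ → F} {C ε : ℝ} (hy : ∀ k, ‖y k‖ ≤ C * ε ^ k)
    (k : ℕ) : ‖shiftSubSmul c y k‖ ≤ (‖c‖ + ε) * C * ε ^ k :=
  calc ‖y (k + 1) - c • y k‖
      ≤ ‖y (k + 1)‖ + ‖c‖ * ‖y k‖ := (norm_sub_le _ _).trans_eq (by rw [norm_smul])
    _ ≤ C * ε ^ (k + 1) + ‖c‖ * (C * ε ^ k) := by gcongr <;> apply hy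
    _ = (‖c‖ + ε) * C * ε ^ k := by ring

theorem norm_iterate_shiftSubSmul_le (c : K) {y : ℕ → F} {C ε : ℝ}
    (hy : ∀ k, ‖y k‖ ≤ C * ε ^ k) (n k : ℕ) :
    ‖(shiftSubSmul c)^[n] y k‖ ≤ (‖c‖ + ε) ^ n * C * ε ^ k := by
  induction n generalizing k with
  | zero => simpa using hy k
  | succ n ih =>
    rw [Function.iterate_succ_apply']
    calc _ ≤ (‖c‖ + ε) * ((‖c‖ + ε) ^ n * C) * ε ^ k := norm_shiftSubSmul_le c ih k
      _ = (‖c‖ + ε) ^ (n + 1) * C * ε ^ k := by ring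

end Bounds

section Commute

variable {A : E →ₗ.[𝕜] E} {c : 𝕜}

theorem apply_shiftSubSmul {y : ℕ → E}
    (hy : ∀ k, ∃ h : y k ∈ A.domain, A ⟨y k, h⟩ = shiftSubSmul c y k) (k : ℕ) :
    ∃ h : shiftSubSmul c y k ∈ A.domain,
      A ⟨shiftSubSmul c y k, h⟩ = shiftSubSmul c (shiftSubSmul c y) k := by
  obtain ⟨h₁, hA₁⟩ := hy (k + 1)
  obtain ⟨h₀, hA₀⟩ := hy k
  refine ⟨A.domain.sub_mem h₁ (A.domain.smul_mem c h₀), ?_⟩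
  have hsplit : (⟨shiftSubSmul c y k, A.domain.sub_mem h₁ (A.domain.smul_mem c h₀)⟩ : A.domain)
      = ⟨y (k + 1), h₁⟩ - c • ⟨y k, h₀⟩ := rfl
  rw [hsplit, A.map_sub, A.map_smul, hA₁, hA₀]
  rfl

theorem apply_iterate_shiftSubSmul {y : ℕ → E}
    (hy : ∀ k, ∃ h : y k ∈ A.domain, A ⟨y k, h⟩ = shiftSubSmul c y k) (n k : ℕ) :
    ∃ h : (shiftSubSmul c)^[n] y k ∈ A.domain,
      A ⟨(shiftSubSmul c)^[n] y k, h⟩ = (shiftSubSmul c)^[n + 1] y k := by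
  induction n generalizing y with
  | zero => exact hy k
  | succ n ih => exact ih (apply_shiftSubSmul hy)

end Commute

theorem apply_eq_shiftSubSmul_of_powRel_shiftPMap {A : E →ₗ.[𝕜] E} {δ : ℝ} {x : E}
    {y : ℕ → E} (h : ∀ k, PowRel (shiftPMap A δ) k x (y k)) (k : ℕ) :
    ∃ hy : y k ∈ A.domain, A ⟨y k, hy⟩ = shiftSubSmul (δ : 𝕜) y k := by
  obtain ⟨hy, hB⟩ := PowRel.apply_eq_succ h k
  have hAB : A ⟨y k, hy⟩ + (δ : 𝕜) • y k = y (k + 1) := hB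
  exact ⟨hy, by rw [shiftSubSmul, ← hAB, add_sub_cancel_right]⟩

theorem stmt2_general (A : E →ₗ.[𝕜] E)
    (δ ε : ℝ) (hδ : 0 ≤ δ) :
    Fset (shiftPMap A δ) ε ⊆ Fset A (δ + ε) := by
  intro x hx n
  choose y hyB hy using hx
  have hx0 : y 0 = x := (hyB 0).unique (.zero x)
  have hAy := apply_eq_shiftSubSmul_of_powRel_shiftPMap hyB
  refine ⟨(shiftSubSmul (δ : 𝕜))^[n] y 0, ?_, ?_⟩
  · have hz := PowRel.of_apply_eq_succ (fun m => apply_iterate_shiftSubSmul hAy m 0) n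
    rwa [Function.iterate_zero_apply, hx0] at hz
  · have hbound := norm_iterate_shiftSubSmul_le (δ : 𝕜)
      (fun k => (hy k).trans_eq (mul_comm _ _)) n 0
    rwa [RCLike.norm_ofReal, abs_of_nonneg hδ, pow_zero, mul_one] at hbound

theorem stmt2 (A : E →ₗ.[𝕜] E) (hA : A.IsClosed) (hH : IsHermitianPMap A)
    (δ ε : ℝ) (hδ : 0 ≤ δ) (hε : 0 ≤ ε) :
    Fset (shiftPMap A δ) ε ⊆ Fset A (δ + ε) :=
  stmt2_general A δ ε hδ
end

section
/- If A is a Hermitian operator on a finite-dimensional Hilbert space H with A ≥ 0, and x ∈ F(A,λ)⊥ with x ≠ 0, then ⟨Ax, x⟩ > λ⟨x, x⟩ for every λ ≥ 0. -/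
open InnerProductSpace RCLike Filter Topology MeasureTheory Set

variable {𝕜 E : Type*} [RCLike 𝕜] [NormedAddCommGroup E] [InnerProductSpace 𝕜 E]

local notation "⟪" x ", " y "⟫" => @inner 𝕜 _ _ x y

/-- `F(A,λ)` for an everywhere defined linear operator. -/
def FsetL (T : E →ₗ[𝕜] E) (lam : ℝ) : Set E :=
  {x | ∀ n : ℕ, ‖(T ^ n) x‖ ≤ lam ^ n * ‖x‖}

/-! Expand `x` in an orthonormal eigenbasis of `A`. An eigenvector with eigenvalue `μ ∈ [0, λ]`
satisfies `‖Aⁿv‖ = μⁿ‖v‖ ≤ λⁿ‖v‖`, so it lies in `F(A,λ)` and `x` has no component along it.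
Hence every eigenvalue `μᵢ` carried by `x` exceeds `λ`, and
`⟨Ax, x⟩ = ∑ μᵢ |⟨bᵢ, x⟩|² > λ ∑ |⟨bᵢ, x⟩|² = λ ⟨x, x⟩`. -/

theorem mem_FsetL_of_hasEigenvector (T : E →ₗ[𝕜] E) {μ lam : ℝ} {v : E}
    (hv : Module.End.HasEigenvector T (μ : 𝕜) v) (hμ : |μ| ≤ lam) :
    v ∈ FsetL T lam := fun n => by
  rw [hv.pow_apply, norm_smul, norm_pow, RCLike.norm_ofReal]
  gcongr

namespace LinearMap.IsSymmetric

variable [FiniteDimensional 𝕜 E] {T : E →ₗ[𝕜] E} {n : ℕ}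

theorem re_inner_apply_self_eq_sum (hT : T.IsSymmetric) (hn : Module.finrank 𝕜 E = n) (x : E) :
    re ⟪T x, x⟫ = ∑ i, hT.eigenvalues hn i * ‖⟪hT.eigenvectorBasis hn i, x⟫‖ ^ 2 := by
  set b := hT.eigenvectorBasis hn
  have hterm : ∀ i,
      ⟪T x, b i⟫ * ⟪b i, x⟫ = (hT.eigenvalues hn i * ‖⟪b i, x⟫‖ ^ 2 : ℝ) := by
    intro i
    rw [hT x, hT.apply_eigenvectorBasis, inner_smul_right, mul_assoc, ← inner_conj_symm x,
      RCLike.conj_mul]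
    push_cast
    rfl
  rw [← b.sum_inner_mul_inner, map_sum]
  simp only [hterm, RCLike.ofReal_re]

end LinearMap.IsSymmetric

theorem mul_sum_lt_sum_mul_of_lt {ι : Type*} [Fintype ι] {w f : ι → ℝ} {a : ℝ}
    (hw : ∀ i, 0 ≤ w i) (hf : ∀ i, w i ≠ 0 → a < f i) (hne : ∃ i, w i ≠ 0) :
    a * ∑ i, w i < ∑ i, f i * w i := by
  rw [Finset.mul_sum]
  obtain ⟨j, hj⟩ := hne
  refine Finset.sum_lt_sum (fun i _ => ?_) ⟨j, Finset.mem_univ j, ?_⟩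
  · rcases eq_or_ne (w i) 0 with h | h
    · simp [h]
    · exact mul_le_mul_of_nonneg_right (hf i h).le (hw i)
  · exact mul_lt_mul_of_pos_right (hf j hj) ((hw j).lt_of_ne' hj)

theorem stmt5_general [FiniteDimensional 𝕜 E] (A : E →ₗ[𝕜] E) (hA : A.IsSymmetric)
    (hpos : ∀ y : E, 0 ≤ re ⟪A y, y⟫)
    (lam : ℝ) (x : E) (hx : x ∈ ocompl 𝕜 (FsetL A lam)) (hx0 : x ≠ 0) :
    lam * re ⟪x, x⟫ < re ⟪A x, x⟫ := by
  set b := hA.eigenvectorBasis rfl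
  set μ := hA.eigenvalues rfl
  have hμ_nonneg : ∀ i, 0 ≤ μ i := fun i =>
    eigenvalue_nonneg_of_nonneg (hA.hasEigenvalue_eigenvalues rfl i) fun y => hA y y ▸ hpos y
  have hlt : ∀ i, ‖⟪b i, x⟫‖ ^ 2 ≠ 0 → lam < μ i := by
    intro i hi
    by_contra! hle
    refine hi ?_
    rw [hx (b i) (mem_FsetL_of_hasEigenvector A (hA.hasEigenvector_eigenvectorBasis rfl i)
      ((abs_of_nonneg (hμ_nonneg i)).trans_le hle))]
    simp
  have hne : ∃ i, ‖⟪b i, x⟫‖ ^ 2 ≠ 0 := by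
    by_contra! h
    have : ‖x‖ ^ 2 = 0 := by simp [← b.sum_sq_norm_inner_right x, h]
    exact hx0 (by simpa using this)
  rw [inner_self_eq_norm_sq, ← b.sum_sq_norm_inner_right, hA.re_inner_apply_self_eq_sum rfl]
  exact mul_sum_lt_sum_mul_of_lt (fun i => by positivity) hlt hne

theorem stmt5 [FiniteDimensional 𝕜 E] (A : E →ₗ[𝕜] E) (hA : A.IsSymmetric)
    (hpos : ∀ y : E, 0 ≤ re ⟪A y, y⟫)
    (lam : ℝ) (hlam : 0 ≤ lam) (x : E) (hx : x ∈ ocompl 𝕜 (FsetL A lam)) (hx0 : x ≠ 0) :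
    lam * re ⟪x, x⟫ < re ⟪A x, x⟫ :=
  stmt5_general A hA hpos lam x hx hx0
end
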